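/- For m, n ≥ 0, k ≥ 0, and 1 ≤ r ≤ m+1, there is a bijection ψ from reduced m × n parallelogram polyominoes with r zeros in the area word and k decorated rises, to two-cars parking functions with n ones and m twos, r−1 twos on the main diagonal, and k decorated rises, preserving both dinv and underlined-area. -/

import Mathlib

open Finset

/-! ## Lattice-path preliminaries for parallelogram polyominoes.
Paths are lists of booleans: `true` = north step, `false` = east step. -/

/-- Interlacing `D = (r₁, 1-g₁, r₂, 1-g₂, …)` of the red path and the complemented green path. -/
def interlace : List Bool → List Bool → List Bool
  | [], _ => []
  | _ :: _, [] => []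
  | a :: as, b :: bs => a :: (!b) :: interlace as bs

/-- Reading levels along a 0/1 word: on a `true` record the current level and go up one level,
on a `false` go down one level (recording nothing). -/
def levels : List Bool → ℕ → List ℕ
  | [], _ => []
  | true :: rest, l => l :: levels rest (l + 1)
  | false :: rest, l => levels rest (l - 1)

def countTrue (l : List Bool) : ℕ := (l.filter fun b => b = true).length
def countFalse (l : List Bool) : ℕ := (l.filter fun b => b = false).length

/-- The number of `true`s (north steps) occurring before the `(x+1)`-st `false` (east step):
the height of the path along the column `x ↦ x+1`. -/
def colHeight : List Bool → ℕ → ℕ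
  | [], _ => 0
  | true :: rest, k => colHeight rest k + 1
  | false :: _, 0 => 0
  | false :: rest, k + 1 => colHeight rest k

/-- The number of `false`s (east steps) occurring before the `(y+1)`-st `true` (north step). -/
def colX (p : List Bool) (y : ℕ) : ℕ := colHeight (p.map fun b => !b) y

/-- `r` and `g` are the red (upper) and green (lower) boundary paths of an `m × n`
parallelogram polyomino: both go from `(0,0)` to `(m,n)` and the red one stays strictly
above the green one except at the endpoints. -/
def IsPolyo (m n : ℕ) (r g : List Bool) : Prop :=
  r.length = m + n ∧ g.length = m + n ∧ countTrue r = n ∧ countTrue g = n ∧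
    ∀ i : ℕ, 1 ≤ i → i < m + n → countTrue (g.take i) < countTrue (r.take i)

/-- Reduced parallelogram polyomino: the red path stays weakly above the green one. -/
def IsRPolyo (m n : ℕ) (r g : List Bool) : Prop :=
  r.length = m + n ∧ g.length = m + n ∧ countTrue r = n ∧ countTrue g = n ∧
    ∀ i : ℕ, countTrue (g.take i) ≤ countTrue (r.take i)

/-- The area word of a (standard) parallelogram polyomino, as the list of letters of the
alphabet `0̄ < 1 < 1̄ < 2 < 2̄ < ⋯` encoded by their indices `0, 1, 2, 3, 4, …`.
Barred letters have even index, unbarred letters odd index. -/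
def areaWord (r g : List Bool) : List ℕ := levels (interlace r g) 0

/-- The numerical value of the letter with index `j` in the alphabet `0̄ < 1 < 1̄ < 2 < ⋯`. -/
def wval (j : ℕ) : ℕ := (j + 1) / 2

/-- The number of unit cells strictly between the two boundary paths. -/
def cellArea (m : ℕ) (r g : List Bool) : ℕ :=
  ∑ x ∈ Finset.range m, (colHeight r x - colHeight g x)

/-- `area` as the sum of the values of the letters of the area word. -/
def areaStat (r g : List Bool) : ℕ := ((areaWord r g).map wval).sum

/-- `dinv`: the number of pairs of letters of the area word such that the rightmost letter is
the successor (in the alphabet `0̄ < 1 < 1̄ < ⋯`) of the leftmost one. -/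
def dinvStat (r g : List Bool) : ℕ :=
  ((Finset.range (areaWord r g).length ×ˢ Finset.range (areaWord r g).length).filter
    fun p => p.1 < p.2 ∧ (areaWord r g).getD p.2 0 = (areaWord r g).getD p.1 0 + 1).card

/-- A rise of the area word: a barred letter immediately followed by its successor. -/
def IsRise (w : List ℕ) (i : ℕ) : Prop :=
  i + 1 < w.length ∧ w.getD i 0 % 2 = 0 ∧ w.getD (i + 1) 0 = w.getD i 0 + 1

/-- `underlined area`: the sum of the values of the letters of the area word, ignoring the
(barred) letters at the decorated positions `D`. -/
def uareaStat (r g : List Bool) (D : Finset ℕ) : ℕ :=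
  ∑ i ∈ Finset.range (areaWord r g).length \ D, wval ((areaWord r g).getD i 0)

/-! ### Reduced parallelogram polyominoes. -/

/-- The area word of a reduced parallelogram polyomino, with the initial artificial `0`,
as the list of letters of the alphabet `0 < 0̄ < 1 < 1̄ < 2 < ⋯` encoded by their indices
`0, 1, 2, 3, 4, …`. Barred letters have odd index; the letter of index `j` has value `j / 2`. -/
def areaWordR (r g : List Bool) : List ℕ := 0 :: levels (interlace r g) 1

/-- The value of the letter with index `j` in the alphabet `0 < 0̄ < 1 < 1̄ < ⋯`. -/
def rval (j : ℕ) : ℕ := j / 2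

/-- `dinv` of a reduced parallelogram polyomino: the number of pairs of letters of the area
word such that the leftmost is the successor of the rightmost in the alphabet. -/
def dinvR (r g : List Bool) : ℕ :=
  ((Finset.range (areaWordR r g).length ×ˢ Finset.range (areaWordR r g).length).filter
    fun p => p.1 < p.2 ∧ (areaWordR r g).getD p.1 0 = (areaWordR r g).getD p.2 0 + 1).card

/-- `underlined area` of a reduced parallelogram polyomino with decorated positions `D`
(the unbarred letters of the decorated rises). -/
def uareaR (r g : List Bool) (D : Finset ℕ) : ℕ :=
  ∑ i ∈ Finset.range (areaWordR r g).length \ D, rval ((areaWordR r g).getD i 0)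

/-- Carrier for decorated reduced polyominoes: the two paths and the decoration positions
(inside the area word, which has length `m + n + 1`). -/
abbrev RPolyCarrier (N : ℕ) := ((Fin N → Bool) × (Fin N → Bool)) × Finset (Fin (N + 1))

def RRl {N : ℕ} (P : RPolyCarrier N) : List Bool := List.ofFn P.1.1
def RGl {N : ℕ} (P : RPolyCarrier N) : List Bool := List.ofFn P.1.2
def RDn {N : ℕ} (P : RPolyCarrier N) : Finset ℕ := P.2.image Fin.val

/-- Reduced `m × n` parallelogram polyominoes with `r` zeros (unbarred letters `0`, including
the artificial one) in the area word and `k` decorated rises; a rise is a barred letter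
immediately followed by its successor, and the decoration is put on the unbarred letter. -/
abbrev RPStar (m n r k : ℕ) : Type :=
  { P : RPolyCarrier (m + n) //
    IsRPolyo m n (RRl P) (RGl P) ∧ (areaWordR (RRl P) (RGl P)).count 0 = r ∧
      (∀ j ∈ P.2, 1 ≤ j.val ∧ (areaWordR (RRl P) (RGl P)).getD (j.val - 1) 0 % 2 = 1 ∧
        (areaWordR (RRl P) (RGl P)).getD j.val 0 =
          (areaWordR (RRl P) (RGl P)).getD (j.val - 1) 0 + 1) ∧
      P.2.card = k }

/-! ### Two-cars parking functions. -/

/-- Carrier for decorated two-cars parking functions of size `N`: each row carries a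
label/area-word-letter pair, plus a decoration set. -/
abbrev PFCarrier (N : ℕ) := (Fin N → ℕ × ℕ) × Finset (Fin N)

def PFa {N : ℕ} (P : PFCarrier N) : List ℕ := List.ofFn fun i => (P.1 i).1
def PFb {N : ℕ} (P : PFCarrier N) : List ℕ := List.ofFn fun i => (P.1 i).2
def PFD {N : ℕ} (P : PFCarrier N) : Finset ℕ := P.2.image Fin.val

/-- Valid labelled Dyck path data: `b` is the area word of a Dyck path and the labels `a` are
strictly increasing along columns (consecutive rows in the same column). -/
def IsParkingData (a b : List ℕ) : Prop :=
  b.getD 0 0 = 0 ∧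
    ∀ i : ℕ, i + 1 < b.length →
      (b.getD (i + 1) 0 ≤ b.getD i 0 + 1 ∧
        (b.getD (i + 1) 0 = b.getD i 0 + 1 → a.getD i 0 < a.getD (i + 1) 0))

/-- Two-cars parking functions with `n` labels `1` and `m` labels `2`, `r - 1` twos on the
main diagonal, and `k` decorated rises (a decoration marks the topmost row of a pair of
consecutive vertical steps). -/
abbrev PF2Star (m n r k : ℕ) : Type :=
  { P : PFCarrier (m + n) //
    IsParkingData (PFa P) (PFb P) ∧ (∀ i : Fin (m + n), (P.1 i).1 = 1 ∨ (P.1 i).1 = 2) ∧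
      (PFa P).count 1 = n ∧ (PFa P).count 2 = m ∧
      ((Finset.range (m + n)).filter fun i =>
        (PFb P).getD i 0 = 0 ∧ (PFa P).getD i 0 = 2).card = r - 1 ∧
      (∀ j ∈ P.2, 1 ≤ j.val ∧
        (PFb P).getD j.val 0 = (PFb P).getD (j.val - 1) 0 + 1) ∧
      P.2.card = k }

/-- `dinv` of a parking function given by labels `a` and area word `b`. -/
def dinvPF (a b : List ℕ) : ℕ :=
  ((Finset.range b.length ×ˢ Finset.range b.length).filter fun p =>
    p.1 < p.2 ∧ ((b.getD p.1 0 = b.getD p.2 0 ∧ a.getD p.1 0 < a.getD p.2 0) ∨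
      (b.getD p.1 0 = b.getD p.2 0 + 1 ∧ a.getD p.2 0 < a.getD p.1 0))).card

/-- `underlined area` of a decorated parking function: the sum of the area word, ignoring
the letters of the decorated rows. -/
def uareaPF (b : List ℕ) (D : Finset ℕ) : ℕ :=
  ∑ i ∈ Finset.range b.length \ D, b.getD i 0

/-!
Read the interlaced word `r₁ (1-g₁) r₂ (1-g₂) ⋯` as a walk (`true` = up) started at level `1`
and record the level at each up step: this is `levels (interlace r g) 1`, the area word of the
reduced polyomino without its initial `0`. Since the walk is at an odd level exactly before each
`rᵢ`, a letter is odd (barred) iff it comes from a north step of the red path, and the walk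
never has to step down from level `0` iff the red path stays weakly above the green one. A walk
that never steps down from `0` and ends at level `1` is determined by its level word, and the
level words are exactly the words `w` with `w₀ ≤ 1` and `wᵢ₊₁ ≤ wᵢ + 1`.

Splitting the letter `j` into the label `1` or `2` (as `j` is odd or even) and the value
`⌊j/2⌋` turns `wᵢ₊₁ ≤ wᵢ + 1` into the parking condition, the relation `j = j' + 1` into the two
cases of the parking-function `dinv`, and letter values into area, so `ψ` is this letterwise
translation and both statistics are read off the same word.
-/

@[simp] lemma countTrue_nil : countTrue [] = 0 := rfl

@[simp] lemma countFalse_nil : countFalse [] = 0 := rfl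

@[simp] lemma countTrue_cons (a : Bool) (t : List Bool) :
    countTrue (a :: t) = countTrue t + a.toNat := by
  cases a <;> simp [countTrue]

@[simp] lemma countFalse_cons (a : Bool) (t : List Bool) :
    countFalse (a :: t) = countFalse t + (!a).toNat := by
  cases a <;> simp [countFalse]

lemma countTrue_add_countFalse (t : List Bool) : countTrue t + countFalse t = t.length := by
  induction t with
  | nil => rfl
  | cons a t ih => cases a <;> simp <;> omega

/-! ### Walks and their level words -/

/-- The walks along which the truncated subtraction in `levels` never truncates. -/
def StaysNonneg : List Bool → ℕ → Prop
  | [], _ => True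
  | true :: t, l => StaysNonneg t (l + 1)
  | false :: t, l => 1 ≤ l ∧ StaysNonneg t (l - 1)

def finalLevel : List Bool → ℕ → ℕ
  | [], l => l
  | true :: t, l => finalLevel t (l + 1)
  | false :: t, l => finalLevel t (l - 1)

def LevelSeq : List ℕ → ℕ → Prop
  | [], _ => True
  | x :: w, l => x ≤ l ∧ LevelSeq w (x + 1)

/-- The walk from level `l` with level word `w` that ends at level `1`. -/
def stepsOfLevels : List ℕ → ℕ → List Bool
  | [], l => List.replicate (l - 1) false
  | x :: w, l => List.replicate (l - x) false ++ true :: stepsOfLevels w (x + 1)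

lemma length_levels (t : List Bool) (l : ℕ) : (levels t l).length = countTrue t := by
  induction t generalizing l with
  | nil => rfl
  | cons a t ih => cases a <;> simp [levels, ih]

lemma LevelSeq.mono {w : List ℕ} {l l' : ℕ} (h : LevelSeq w l) (hl : l ≤ l') :
    LevelSeq w l' := by
  cases w with
  | nil => trivial
  | cons x w => exact ⟨h.1.trans hl, h.2⟩

lemma levelSeq_levels (t : List Bool) (l : ℕ) : LevelSeq (levels t l) l := by
  induction t generalizing l with
  | nil => trivial
  | cons a t ih =>
    cases a
    · exact (ih (l - 1)).mono (Nat.sub_le l 1)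
    · exact ⟨le_rfl, ih (l + 1)⟩

lemma levels_replicate_false_append (k : ℕ) (t : List Bool) (l : ℕ) :
    levels (List.replicate k false ++ t) l = levels t (l - k) := by
  induction k generalizing l with
  | zero => rfl
  | succ k ih =>
    rw [List.replicate_succ, List.cons_append, levels, ih, Nat.sub_sub, Nat.add_comm]

lemma staysNonneg_replicate_false_append {k l : ℕ} {t : List Bool} (hk : k ≤ l)
    (h : StaysNonneg t (l - k)) : StaysNonneg (List.replicate k false ++ t) l := by
  induction k generalizing l with
  | zero => exact h
  | succ k ih =>
    refine ⟨by omega, ih (by omega) ?_⟩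
    rwa [Nat.sub_sub, Nat.add_comm]

lemma levels_stepsOfLevels {w : List ℕ} {l : ℕ} (h : LevelSeq w l) :
    levels (stepsOfLevels w l) l = w := by
  induction w generalizing l with
  | nil => simpa [stepsOfLevels, levels] using levels_replicate_false_append (l - 1) [] l
  | cons x w ih =>
    rw [stepsOfLevels, levels_replicate_false_append, Nat.sub_sub_self h.1, levels, ih h.2]

lemma staysNonneg_stepsOfLevels {w : List ℕ} {l : ℕ} (h : LevelSeq w l) :
    StaysNonneg (stepsOfLevels w l) l := by
  induction w generalizing l with
  | nil =>
    simpa [stepsOfLevels] using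
      staysNonneg_replicate_false_append (t := []) (Nat.sub_le l 1) trivial
  | cons x w ih =>
    refine staysNonneg_replicate_false_append (Nat.sub_le l x) ?_
    rw [Nat.sub_sub_self h.1]
    exact ih h.2

lemma length_stepsOfLevels {w : List ℕ} {l : ℕ} (hl : 1 ≤ l) (h : LevelSeq w l) :
    (stepsOfLevels w l).length = l - 1 + 2 * w.length := by
  induction w generalizing l with
  | nil => simp [stepsOfLevels]
  | cons x w ih =>
    simp only [stepsOfLevels, List.length_append, List.length_replicate, List.length_cons,
      ih (Nat.le_add_left 1 x) h.2]
    have := h.1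
    omega

lemma finalLevel_add_countFalse {t : List Bool} {l : ℕ} (h : StaysNonneg t l) :
    finalLevel t l + countFalse t = l + countTrue t := by
  induction t generalizing l with
  | nil => rfl
  | cons a t ih =>
    cases a
    · have := ih h.2
      have := h.1
      simp only [finalLevel, countFalse_cons, countTrue_cons, Bool.not_false, Bool.toNat_true,
        Bool.toNat_false]
      omega
    · have := ih h
      simp only [finalLevel, countFalse_cons, countTrue_cons, Bool.not_true, Bool.toNat_true,
        Bool.toNat_false]
      omega

lemma finalLevel_le_of_levels_eq_nil {t : List Bool} {l : ℕ} (h : levels t l = []) :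
    finalLevel t l ≤ l := by
  induction t generalizing l with
  | nil => exact le_rfl
  | cons a t ih =>
    cases a
    · exact (ih h).trans (Nat.sub_le l 1)
    · simp [levels] at h

lemma stepsOfLevels_succ {w : List ℕ} {l : ℕ} (h : LevelSeq w l) (hw : w = [] → 1 ≤ l) :
    stepsOfLevels w (l + 1) = false :: stepsOfLevels w l := by
  cases w with
  | nil =>
    obtain ⟨k, rfl⟩ := Nat.exists_eq_add_of_le' (hw rfl)
    rfl
  | cons x w =>
    rw [stepsOfLevels, stepsOfLevels, Nat.sub_add_comm h.1, List.replicate_succ, List.cons_append]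

lemma stepsOfLevels_levels {t : List Bool} {l : ℕ} (h : StaysNonneg t l)
    (hf : 1 ≤ finalLevel t l) :
    stepsOfLevels (levels t l) l = t ++ List.replicate (finalLevel t l - 1) false := by
  induction t generalizing l with
  | nil => rfl
  | cons a t ih =>
    cases a
    · obtain ⟨hl, h⟩ := h
      obtain ⟨l, rfl⟩ := Nat.exists_eq_add_of_le' hl
      have hw : levels t l = [] → 1 ≤ l := fun he => hf.trans (finalLevel_le_of_levels_eq_nil he)
      rw [levels, Nat.add_sub_cancel, stepsOfLevels_succ (levelSeq_levels t l) hw,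
        ih (l := l) h hf]
      rfl
    · rw [levels, stepsOfLevels, Nat.sub_self, ih h hf]
      rfl

/-! ### Interlacing -/

@[simp] lemma interlace_cons_cons (a b : Bool) (r g : List Bool) :
    interlace (a :: r) (b :: g) = a :: (!b) :: interlace r g := rfl

def deinterlace : List Bool → List Bool × List Bool
  | a :: b :: t => (a :: (deinterlace t).1, (!b) :: (deinterlace t).2)
  | _ => ([], [])

lemma deinterlace_interlace {r g : List Bool} (h : r.length = g.length) :
    deinterlace (interlace r g) = (r, g) := by
  induction r generalizing g with
  | nil => cases g <;> simp_all [interlace, deinterlace]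
  | cons a r ih =>
    cases g with
    | nil => simp at h
    | cons b g => simp [deinterlace, ih (Nat.succ_injective h)]

lemma interlace_deinterlace : ∀ {t : List Bool}, Even t.length →
    interlace (deinterlace t).1 (deinterlace t).2 = t
  | [], _ => rfl
  | [_], h => by simp at h
  | a :: b :: t, h => by
    simp [deinterlace, interlace_deinterlace (t := t) (by simpa [Nat.even_add_one] using h)]

lemma length_deinterlace : ∀ t : List Bool,
    (deinterlace t).1.length = t.length / 2 ∧ (deinterlace t).2.length = t.length / 2
  | [] | [_] => by simp [deinterlace]
  | a :: b :: t => by simp [deinterlace, length_deinterlace t]; omega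

lemma countTrue_interlace {r g : List Bool} (h : r.length = g.length) :
    countTrue (interlace r g) = countTrue r + countFalse g := by
  induction r generalizing g with
  | nil => cases g <;> simp_all [interlace]
  | cons a r ih =>
    cases g with
    | nil => simp at h
    | cons b g => simp [ih (Nat.succ_injective h)]; omega

lemma countFalse_interlace {r g : List Bool} (h : r.length = g.length) :
    countFalse (interlace r g) = countFalse r + countTrue g := by
  induction r generalizing g with
  | nil => cases g <;> simp_all [interlace]
  | cons a r ih =>
    cases g with
    | nil => simp at h
    | cons b g => cases a <;> cases b <;> simp [ih (Nat.succ_injective h)] <;> omega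

lemma forall_countTrue_take_cons_iff (a b : Bool) (r g : List Bool) (c : ℕ) :
    (∀ i, countTrue ((b :: g).take i) ≤ countTrue ((a :: r).take i) + c) ↔
      b.toNat ≤ a.toNat + c ∧
        ∀ i, countTrue (g.take i) + b.toNat ≤ countTrue (r.take i) + a.toNat + c := by
  constructor
  · intro h
    refine ⟨by simpa using h 1, fun i => ?_⟩
    have := h (i + 1)
    simp only [List.take_succ_cons, countTrue_cons] at this
    omega
  · rintro ⟨h0, h⟩ (_ | i)
    · simp
    · simp only [List.take_succ_cons, countTrue_cons]
      have := h i
      omega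

/-- Before each pair of steps the walk is at the odd level `2 * c + 1`, where `c` is the
current vertical distance between the red and the green path. -/
lemma staysNonneg_interlace_iff {r g : List Bool} (h : r.length = g.length) {l c : ℕ}
    (hl : l = 2 * c + 1) :
    StaysNonneg (interlace r g) l ↔ ∀ i, countTrue (g.take i) ≤ countTrue (r.take i) + c := by
  induction r generalizing g l c with
  | nil => cases g <;> simp_all [interlace, StaysNonneg]
  | cons a r ih =>
    cases g with
    | nil => simp at h
    | cons b g =>
      have ih := fun {l c : ℕ} => ih (g := g) (Nat.succ_injective h) (l := l) (c := c)
      rw [forall_countTrue_take_cons_iff]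
      subst hl
      cases a <;> cases b <;> simp [StaysNonneg]
      · exact ih rfl
      · constructor
        · rintro ⟨hc, hs⟩
          have := (ih (c := c - 1) (by omega)).1 hs
          exact ⟨by omega, fun i => by have := this i; omega⟩
        · rintro ⟨hc, hs⟩
          exact ⟨by omega, (ih (c := c - 1) (by omega)).2 fun i => by have := hs i; omega⟩
      · exact (ih (c := c + 1) (by omega)).trans (forall_congr' fun i => by omega)
      · exact (ih rfl).trans (forall_congr' fun i => by omega)

lemma countP_odd_levels_interlace {r g : List Bool} (h : r.length = g.length) {l : ℕ}
    (hl : l % 2 = 1) (hs : StaysNonneg (interlace r g) l) :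
    (levels (interlace r g) l).countP (· % 2 = 1) = countTrue r := by
  induction r generalizing g l with
  | nil => cases g <;> simp_all [interlace, levels]
  | cons a r ih =>
    cases g with
    | nil => simp at h
    | cons b g =>
      have ih := fun {l : ℕ} => ih (g := g) (Nat.succ_injective h) (l := l)
      cases a <;> cases b <;> simp [StaysNonneg, levels] at hs ⊢
      · rw [Nat.sub_add_cancel hs.1] at hs ⊢
        simp only [List.countP_cons, ih hl hs.2, decide_eq_true_eq]
        split_ifs <;> omega
      · exact ih (by omega) hs.2.2
      · simp only [List.countP_cons, ih (by omega) hs, decide_eq_true_eq]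
        split_ifs <;> omega
      · simp [ih hl hs, hl]

section
variable {m n : ℕ} {r g : List Bool}

lemma IsRPolyo.staysNonneg (h : IsRPolyo m n r g) : StaysNonneg (interlace r g) 1 :=
  (staysNonneg_interlace_iff (h.1.trans h.2.1.symm) (c := 0) rfl).2 h.2.2.2.2

lemma IsRPolyo.countFalse_eq (h : IsRPolyo m n r g) : countFalse r = m ∧ countFalse g = m := by
  obtain ⟨hr, hg, hcr, hcg, -⟩ := h
  have := countTrue_add_countFalse r
  have := countTrue_add_countFalse g
  omega

lemma IsRPolyo.length_levels_interlace (h : IsRPolyo m n r g) :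
    (levels (interlace r g) 1).length = m + n := by
  rw [length_levels, countTrue_interlace (h.1.trans h.2.1.symm), h.2.2.1, h.countFalse_eq.2,
    Nat.add_comm]

lemma IsRPolyo.countP_odd_levels (h : IsRPolyo m n r g) :
    (levels (interlace r g) 1).countP (· % 2 = 1) = n := by
  rw [countP_odd_levels_interlace (h.1.trans h.2.1.symm) rfl h.staysNonneg, h.2.2.1]

lemma IsRPolyo.stepsOfLevels_levels_interlace (h : IsRPolyo m n r g) :
    stepsOfLevels (levels (interlace r g) 1) 1 = interlace r g := by
  have hlen := h.1.trans h.2.1.symm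
  have hfinal := finalLevel_add_countFalse h.staysNonneg
  rw [countTrue_interlace hlen, countFalse_interlace hlen, h.countFalse_eq.1, h.countFalse_eq.2,
    h.2.2.1, h.2.2.2.1] at hfinal
  have hfinal : finalLevel (interlace r g) 1 = 1 := by omega
  simpa [hfinal] using _root_.stepsOfLevels_levels h.staysNonneg hfinal.ge

end

section
variable {m n : ℕ} {w : List ℕ}

lemma interlace_deinterlace_stepsOfLevels (hw : LevelSeq w 1) :
    interlace (deinterlace (stepsOfLevels w 1)).1 (deinterlace (stepsOfLevels w 1)).2 =
      stepsOfLevels w 1 :=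
  interlace_deinterlace (by simp [length_stepsOfLevels le_rfl hw])

lemma levels_interlace_deinterlace (hw : LevelSeq w 1) :
    levels (interlace (deinterlace (stepsOfLevels w 1)).1 (deinterlace (stepsOfLevels w 1)).2) 1
      = w := by
  rw [interlace_deinterlace_stepsOfLevels hw, levels_stepsOfLevels hw]

lemma isRPolyo_deinterlace (hw : LevelSeq w 1) (hlen : w.length = m + n)
    (hodd : w.countP (· % 2 = 1) = n) :
    IsRPolyo m n (deinterlace (stepsOfLevels w 1)).1 (deinterlace (stepsOfLevels w 1)).2 := by
  set r := (deinterlace (stepsOfLevels w 1)).1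
  set g := (deinterlace (stepsOfLevels w 1)).2
  have hr : r.length = m + n := by
    simp [r, (length_deinterlace _).1, length_stepsOfLevels le_rfl hw, hlen]
  have hg : g.length = m + n := by
    simp [g, (length_deinterlace _).2, length_stepsOfLevels le_rfl hw, hlen]
  have ht : interlace r g = stepsOfLevels w 1 := interlace_deinterlace_stepsOfLevels hw
  have hs : StaysNonneg (interlace r g) 1 := ht ▸ staysNonneg_stepsOfLevels hw
  have hlev : levels (interlace r g) 1 = w := levels_interlace_deinterlace hw
  have hcr : countTrue r = n := by
    rw [← countP_odd_levels_interlace (hr.trans hg.symm) rfl hs, hlev, hodd]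
  have hcg : countFalse g = m := by
    have := length_levels (interlace r g) 1
    rw [hlev, hlen, countTrue_interlace (hr.trans hg.symm), hcr] at this
    omega
  refine ⟨hr, hg, hcr, ?_, (staysNonneg_interlace_iff (hr.trans hg.symm) (c := 0) rfl).1 hs⟩
  have := countTrue_add_countFalse g
  omega

end

/-! ### Letters and parking functions -/

def labelOf (j : ℕ) : ℕ := if j % 2 = 1 then 1 else 2

/-- The row of a two-cars parking function coming from the area-word letter of index `j`:
barred letters (odd `j`) get the label `1`. -/
def decodeLetter (j : ℕ) : ℕ × ℕ := (labelOf j, rval j)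

def encodeLetter (x : ℕ × ℕ) : ℕ := 2 * x.2 + if x.1 = 1 then 1 else 0

lemma labelOf_eq_one_or_two (j : ℕ) : labelOf j = 1 ∨ labelOf j = 2 := by
  unfold labelOf
  split_ifs <;> simp

lemma encodeLetter_decodeLetter (j : ℕ) : encodeLetter (decodeLetter j) = j := by
  simp only [encodeLetter, decodeLetter, labelOf, rval]
  split_ifs <;> omega

lemma decodeLetter_encodeLetter {x : ℕ × ℕ} (hx : x.1 = 1 ∨ x.1 = 2) :
    decodeLetter (encodeLetter x) = x := by
  obtain ⟨a, b⟩ := x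
  simp only at hx
  simp only [encodeLetter, decodeLetter, labelOf, rval, Prod.mk.injEq]
  split_ifs <;> omega

lemma parkingStep_iff (j j' : ℕ) :
    (rval j' ≤ rval j + 1 ∧ (rval j' = rval j + 1 → labelOf j < labelOf j')) ↔ j' ≤ j + 1 := by
  simp only [labelOf, rval]
  split_ifs <;> omega

lemma dinvPair_iff (j j' : ℕ) :
    ((rval j = rval j' ∧ labelOf j < labelOf j') ∨ (rval j = rval j' + 1 ∧ labelOf j' < labelOf j))
      ↔ j = j' + 1 := by
  simp only [labelOf, rval]
  split_ifs <;> omega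

lemma rval_eq_succ_iff {j j' : ℕ} (h : j' ≤ j + 1) :
    rval j' = rval j + 1 ↔ j % 2 = 1 ∧ j' = j + 1 := by
  simp only [rval]
  omega

lemma List.ofFn_getD_eq_map {α β : Type*} {N : ℕ} {l : List α} (h : l.length = N) (f : α → β)
    (d : α) : List.ofFn (fun i : Fin N => f (l.getD i d)) = l.map f := by
  subst h
  apply List.ext_getElem <;> simp

lemma List.getD_map_of_lt {α β : Type*} (f : α → β) {l : List α} {i : ℕ} (hi : i < l.length)
    (d : α) (d' : β) : (l.map f).getD i d' = f (l.getD i d) := by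
  simp [hi]

lemma getD_map_rval (w : List ℕ) (i : ℕ) : (w.map rval).getD i 0 = rval (w.getD i 0) :=
  List.getD_map w 0 rval

lemma card_filter_range_getD {α : Type*} (l : List α) (p : α → Bool) (d : α) :
    ((Finset.range l.length).filter fun i => p (l.getD i d)).card = l.countP p := by
  induction l with
  | nil => simp
  | cons x l ih =>
    rw [List.countP_cons, ← ih, Finset.card_filter, Finset.card_filter, List.length_cons,
      Finset.sum_range_succ']
    simp

lemma countP_even_eq_iff {w : List ℕ} {m n : ℕ} (h : w.length = m + n) :
    w.countP (· % 2 = 0) = m ↔ w.countP (· % 2 = 1) = n := by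
  have := List.length_eq_countP_add_countP (· % 2 = 1) (l := w)
  have heq : w.countP (fun j => decide ¬(decide (j % 2 = 1)) = true) = w.countP (· % 2 = 0) :=
    List.countP_congr fun j _ => by simp
  omega

lemma levelSeq_iff_getD {w : List ℕ} {l : ℕ} :
    LevelSeq w l ↔
      w.getD 0 0 ≤ l ∧ ∀ i, i + 1 < w.length → w.getD (i + 1) 0 ≤ w.getD i 0 + 1 := by
  induction w generalizing l with
  | nil => simp [LevelSeq]
  | cons x w ih =>
    simp only [LevelSeq, ih, List.getD_cons_zero, List.getD_cons_succ, List.length_cons]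
    constructor
    · rintro ⟨hx, h0, hs⟩
      refine ⟨hx, fun i hi => ?_⟩
      cases i with
      | zero => simpa using h0
      | succ i => simpa using hs i (by omega)
    · rintro ⟨hx, hs⟩
      refine ⟨hx, ?_, fun i hi => by simpa using hs (i + 1) (by omega)⟩
      cases w with
      | nil => simp
      | cons y w => simpa using hs 0 (by simp)

lemma isParkingData_map_iff (w : List ℕ) :
    IsParkingData (w.map labelOf) (w.map rval) ↔ LevelSeq w 1 := by
  rw [levelSeq_iff_getD, IsParkingData, List.length_map, getD_map_rval]
  refine and_congr (by simp only [rval]; omega)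
    (forall_congr' fun i => imp_congr_right fun hi => ?_)
  rw [getD_map_rval, getD_map_rval, List.getD_map_of_lt labelOf (by omega) 0,
    List.getD_map_of_lt labelOf hi 0]
  exact parkingStep_iff _ _

lemma count_one_map_labelOf (w : List ℕ) : (w.map labelOf).count 1 = w.countP (· % 2 = 1) := by
  rw [List.count_eq_countP, List.countP_map]
  exact List.countP_congr fun j _ => by simp only [Function.comp, labelOf]; split_ifs <;> simp_all

lemma count_two_map_labelOf (w : List ℕ) : (w.map labelOf).count 2 = w.countP (· % 2 = 0) := by
  rw [List.count_eq_countP, List.countP_map]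
  exact List.countP_congr fun j _ => by simp only [Function.comp, labelOf]; split_ifs <;> simp_all

def parkingOfWord {N : ℕ} (w : List ℕ) (D : Finset (Fin N)) : PFCarrier N :=
  (fun i => decodeLetter (w.getD i 0), D)

def parkingWord {N : ℕ} (Q : PFCarrier N) : List ℕ := List.ofFn fun i => encodeLetter (Q.1 i)

section
variable {N : ℕ} {w : List ℕ}

lemma PFa_parkingOfWord (h : w.length = N) (D : Finset (Fin N)) :
    PFa (parkingOfWord w D) = w.map labelOf :=
  List.ofFn_getD_eq_map h labelOf 0

lemma PFb_parkingOfWord (h : w.length = N) (D : Finset (Fin N)) :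
    PFb (parkingOfWord w D) = w.map rval :=
  List.ofFn_getD_eq_map h rval 0

lemma parkingWord_parkingOfWord (h : w.length = N) (D : Finset (Fin N)) :
    parkingWord (parkingOfWord w D) = w := by
  simpa [parkingWord, parkingOfWord, encodeLetter_decodeLetter] using
    List.ofFn_getD_eq_map h id 0

lemma parkingOfWord_parkingWord {Q : PFCarrier N} (hQ : ∀ i, (Q.1 i).1 = 1 ∨ (Q.1 i).1 = 2) :
    parkingOfWord (parkingWord Q) Q.2 = Q :=
  Prod.ext (funext fun i => by
    simp [parkingOfWord, parkingWord, decodeLetter_encodeLetter (hQ i)]) rfl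

end

/-- The property defining `PF2Star m n r k`. -/
def IsPF2Star (m n r k : ℕ) (P : PFCarrier (m + n)) : Prop :=
  IsParkingData (PFa P) (PFb P) ∧ (∀ i : Fin (m + n), (P.1 i).1 = 1 ∨ (P.1 i).1 = 2) ∧
    (PFa P).count 1 = n ∧ (PFa P).count 2 = m ∧
    ((Finset.range (m + n)).filter fun i =>
      (PFb P).getD i 0 = 0 ∧ (PFa P).getD i 0 = 2).card = r - 1 ∧
    (∀ j ∈ P.2, 1 ≤ j.val ∧
      (PFb P).getD j.val 0 = (PFb P).getD (j.val - 1) 0 + 1) ∧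
    P.2.card = k

section
variable {m n r k : ℕ}

lemma isPF2Star_parkingOfWord_iff {w : List ℕ} (hw : w.length = m + n)
    (D : Finset (Fin (m + n))) :
    IsPF2Star m n r k (parkingOfWord w D) ↔
      LevelSeq w 1 ∧ w.countP (· % 2 = 1) = n ∧ w.count 0 = r - 1 ∧
        (∀ j ∈ D, 1 ≤ j.val ∧ rval (w.getD j.val 0) = rval (w.getD (j.val - 1) 0) + 1) ∧
        D.card = k := by
  have hdiag : ((Finset.range (m + n)).filter fun i =>
      rval (w.getD i 0) = 0 ∧ (w.map labelOf).getD i 0 = 2).card = w.count 0 := by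
    rw [← hw, List.count_eq_countP, ← card_filter_range_getD w (· == 0) 0]
    refine congrArg _ (Finset.filter_congr fun i hi => ?_)
    rw [List.getD_map_of_lt labelOf (Finset.mem_range.1 hi) 0]
    simp only [rval, labelOf, beq_iff_eq]
    split_ifs <;> omega
  simp only [IsPF2Star, PFa_parkingOfWord hw, PFb_parkingOfWord hw, isParkingData_map_iff,
    count_one_map_labelOf, count_two_map_labelOf, countP_even_eq_iff hw, getD_map_rval, hdiag]
  exact ⟨fun ⟨hs, _, hodd, _, h0, hD, hk⟩ => ⟨hs, hodd, h0, hD, hk⟩,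
    fun ⟨hs, hodd, h0, hD, hk⟩ => ⟨hs, fun i => labelOf_eq_one_or_two _, hodd, hodd, h0, hD, hk⟩⟩

lemma isPF2Star_iff_parkingWord {Q : PFCarrier (m + n)}
    (hlab : ∀ i, (Q.1 i).1 = 1 ∨ (Q.1 i).1 = 2) :
    IsPF2Star m n r k Q ↔
      LevelSeq (parkingWord Q) 1 ∧ (parkingWord Q).countP (· % 2 = 1) = n ∧
        (parkingWord Q).count 0 = r - 1 ∧
        (∀ j ∈ Q.2, 1 ≤ j.val ∧
          rval ((parkingWord Q).getD j.val 0) = rval ((parkingWord Q).getD (j.val - 1) 0) + 1) ∧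
        Q.2.card = k := by
  conv_lhs => rw [← parkingOfWord_parkingWord hlab]
  exact isPF2Star_parkingOfWord_iff (by simp [parkingWord]) Q.2

end

/-! ### Statistics -/

def succPairs (w : List ℕ) : Finset (ℕ × ℕ) :=
  (Finset.range w.length ×ˢ Finset.range w.length).filter fun p =>
    p.1 < p.2 ∧ w.getD p.1 0 = w.getD p.2 0 + 1

lemma succPairs_cons_zero (w : List ℕ) :
    succPairs (0 :: w) =
      (succPairs w).map ((addRightEmbedding 1).prodMap (addRightEmbedding 1)) := by
  ext ⟨_ | a, _ | b⟩ <;> simp [succPairs]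

lemma dinvPF_map (w : List ℕ) : dinvPF (w.map labelOf) (w.map rval) = (succPairs w).card := by
  rw [dinvPF, List.length_map, succPairs]
  refine congrArg _ (Finset.filter_congr fun p hp => and_congr_right fun _ => ?_)
  obtain ⟨hp1, hp2⟩ := Finset.mem_product.1 hp
  rw [getD_map_rval, getD_map_rval, List.getD_map_of_lt labelOf (Finset.mem_range.1 hp1) 0,
    List.getD_map_of_lt labelOf (Finset.mem_range.1 hp2) 0]
  exact dinvPair_iff _ _

lemma dinvR_eq_dinvPF (r g : List Bool) :
    dinvR r g =
      dinvPF ((levels (interlace r g) 1).map labelOf) ((levels (interlace r g) 1).map rval) := by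
  rw [dinvPF_map, ← Finset.card_map, ← succPairs_cons_zero]
  rfl

lemma sum_range_succ_sdiff_image_succ {M : Type*} [AddCommMonoid M] (f : ℕ → M) (h0 : f 0 = 0)
    (L : ℕ) (E : Finset ℕ) :
    ∑ i ∈ Finset.range (L + 1) \ E.image (· + 1), f i = ∑ i ∈ Finset.range L \ E, f (i + 1) := by
  simp only [Finset.sdiff_eq_filter, Finset.sum_filter, Finset.sum_range_succ', h0]
  simp

lemma uareaR_image_succ (r g : List Bool) (E : Finset ℕ) :
    uareaR r g (E.image (· + 1)) = uareaPF ((levels (interlace r g) 1).map rval) E := by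
  simp only [uareaR, uareaPF, areaWordR, List.length_cons, List.length_map, getD_map_rval]
  exact sum_range_succ_sdiff_image_succ (fun i => rval ((0 :: levels (interlace r g) 1).getD i 0))
    (by simp [rval]) _ E

/-! ### The bijection -/

section
variable {N : ℕ}

lemma map_succEmb_preimage_succ {D : Finset (Fin (N + 1))} (h0 : (0 : Fin (N + 1)) ∉ D) :
    (D.preimage Fin.succ (Fin.succ_injective N).injOn).map (Fin.succEmb N) = D := by
  ext j
  refine ⟨fun hj => ?_, fun hj => ?_⟩
  · obtain ⟨i, hi, rfl⟩ := Finset.mem_map.1 hj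
    exact Finset.mem_preimage.1 hi
  · obtain ⟨i, rfl⟩ := Fin.exists_succ_eq.2 (ne_of_mem_of_not_mem hj h0)
    exact Finset.mem_map_of_mem _ (Finset.mem_preimage.2 hj)

lemma preimage_succ_map_succEmb (D : Finset (Fin N)) :
    (D.map (Fin.succEmb N)).preimage Fin.succ (Fin.succ_injective N).injOn = D := by
  ext i
  simp

lemma image_val_preimage_succ {D : Finset (Fin (N + 1))} (h0 : (0 : Fin (N + 1)) ∉ D) :
    ((D.preimage Fin.succ (Fin.succ_injective N).injOn).image Fin.val).image (· + 1) =
      D.image Fin.val := by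
  conv_rhs => rw [← map_succEmb_preimage_succ h0]
  simp [Finset.map_eq_image, Finset.image_image, Function.comp_def]

end

/-- A rise of the area word `0 :: w` ends at position `i + 1` exactly when a rise of the parking
function ends at row `i`. -/
lemma rise_cons_zero_iff {w : List ℕ} (hw : LevelSeq w 1) {i : ℕ} (hi : i < w.length) :
    ((0 :: w).getD i 0 % 2 = 1 ∧ (0 :: w).getD (i + 1) 0 = (0 :: w).getD i 0 + 1) ↔
      1 ≤ i ∧ rval (w.getD i 0) = rval (w.getD (i - 1) 0) + 1 := by
  cases i with
  | zero => simp
  | succ i =>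
    simp only [List.getD_cons_succ, Nat.add_sub_cancel,
      rval_eq_succ_iff ((levelSeq_iff_getD.1 hw).2 i hi)]
    simp

/-- Decorations move down one position, past the artificial initial `0` of the area word. -/
noncomputable def toParking {N : ℕ} (P : RPolyCarrier N) : PFCarrier N :=
  parkingOfWord (levels (interlace (RRl P) (RGl P)) 1)
    (P.2.preimage Fin.succ (Fin.succ_injective N).injOn)

def toPolyomino {N : ℕ} (Q : PFCarrier N) : RPolyCarrier N :=
  ((fun i => (deinterlace (stepsOfLevels (parkingWord Q) 1)).1.getD i false,
    fun i => (deinterlace (stepsOfLevels (parkingWord Q) 1)).2.getD i false),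
   Q.2.map (Fin.succEmb N))

/-- The property defining `RPStar m n r k`. -/
def IsRPStar (m n r k : ℕ) (P : RPolyCarrier (m + n)) : Prop :=
  IsRPolyo m n (RRl P) (RGl P) ∧ (areaWordR (RRl P) (RGl P)).count 0 = r ∧
    (∀ j ∈ P.2, 1 ≤ j.val ∧ (areaWordR (RRl P) (RGl P)).getD (j.val - 1) 0 % 2 = 1 ∧
      (areaWordR (RRl P) (RGl P)).getD j.val 0 =
        (areaWordR (RRl P) (RGl P)).getD (j.val - 1) 0 + 1) ∧
    P.2.card = k

section
variable {N : ℕ}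

lemma paths_toPolyomino {Q : PFCarrier N} (hw : LevelSeq (parkingWord Q) 1) :
    RRl (toPolyomino Q) = (deinterlace (stepsOfLevels (parkingWord Q) 1)).1 ∧
      RGl (toPolyomino Q) = (deinterlace (stepsOfLevels (parkingWord Q) 1)).2 := by
  have hlen : (stepsOfLevels (parkingWord Q) 1).length / 2 = N := by
    rw [length_stepsOfLevels le_rfl hw]
    simp [parkingWord]
  obtain ⟨h1, h2⟩ := length_deinterlace (stepsOfLevels (parkingWord Q) 1)
  exact ⟨(List.ofFn_getD_eq_map (h1.trans hlen) id false).trans (List.map_id _),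
    (List.ofFn_getD_eq_map (h2.trans hlen) id false).trans (List.map_id _)⟩

lemma levels_toPolyomino {Q : PFCarrier N} (hw : LevelSeq (parkingWord Q) 1) :
    levels (interlace (RRl (toPolyomino Q)) (RGl (toPolyomino Q))) 1 = parkingWord Q := by
  rw [(paths_toPolyomino hw).1, (paths_toPolyomino hw).2, levels_interlace_deinterlace hw]

end

section
variable {m n r k : ℕ}

lemma zero_notMem_of_isRPStar {P : RPolyCarrier (m + n)} (hP : IsRPStar m n r k P) :
    (0 : Fin (m + n + 1)) ∉ P.2 := fun h => by
  simpa using (hP.2.2.1 0 h).1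

lemma isPF2Star_toParking {P : RPolyCarrier (m + n)} (hP : IsRPStar m n r k P) :
    IsPF2Star m n r k (toParking P) := by
  have h0 := zero_notMem_of_isRPStar hP
  obtain ⟨hP, hzero, hdec, hcard⟩ := hP
  rw [toParking, isPF2Star_parkingOfWord_iff hP.length_levels_interlace]
  refine ⟨levelSeq_levels _ _, hP.countP_odd_levels, ?_, fun i hi => ?_, ?_⟩
  · rw [areaWordR, List.count_cons_self] at hzero
    omega
  · obtain ⟨-, hrise⟩ := hdec _ (Finset.mem_preimage.1 hi)
    simp only [Fin.val_succ, Nat.add_sub_cancel] at hrise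
    exact (rise_cons_zero_iff (levelSeq_levels _ _)
      (i.2.trans_eq hP.length_levels_interlace.symm)).1 hrise
  · rw [← Finset.card_map (Fin.succEmb _), map_succEmb_preimage_succ h0, hcard]

lemma isRPStar_toPolyomino (hr : 1 ≤ r) {Q : PFCarrier (m + n)} (hQ : IsPF2Star m n r k Q) :
    IsRPStar m n r k (toPolyomino Q) := by
  obtain ⟨hs, hodd, hzero, hdec, hcard⟩ := (isPF2Star_iff_parkingWord hQ.2.1).1 hQ
  have hw : (parkingWord Q).length = m + n := by simp [parkingWord]
  have hword : areaWordR (RRl (toPolyomino Q)) (RGl (toPolyomino Q)) = 0 :: parkingWord Q := by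
    rw [areaWordR, levels_toPolyomino hs]
  refine ⟨?_, ?_, fun j hj => ?_, ?_⟩
  · rw [(paths_toPolyomino hs).1, (paths_toPolyomino hs).2]
    exact isRPolyo_deinterlace hs hw hodd
  · rw [hword, List.count_cons_self, hzero]
    omega
  · obtain ⟨i, hi, rfl⟩ := Finset.mem_map.1 hj
    simp only [hword, Fin.coe_succEmb, Fin.val_succ, Nat.add_sub_cancel]
    exact ⟨Nat.le_add_left 1 i, (rise_cons_zero_iff hs (i.2.trans_eq hw.symm)).2 (hdec i hi)⟩
  · exact (Finset.card_map _).trans hcard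

lemma toPolyomino_toParking {P : RPolyCarrier (m + n)} (hP : IsRPolyo m n (RRl P) (RGl P))
    (h0 : (0 : Fin (m + n + 1)) ∉ P.2) : toPolyomino (toParking P) = P := by
  have hsplit : deinterlace (stepsOfLevels (parkingWord (toParking P)) 1) = (RRl P, RGl P) := by
    rw [toParking, parkingWord_parkingOfWord hP.length_levels_interlace,
      hP.stepsOfLevels_levels_interlace, deinterlace_interlace (by simp [RRl, RGl])]
  simp only [toPolyomino, hsplit]
  exact Prod.ext (Prod.ext (funext fun i => by simp [RRl]) (funext fun i => by simp [RGl]))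
    (map_succEmb_preimage_succ h0)

lemma toParking_toPolyomino {Q : PFCarrier (m + n)} (hlab : ∀ i, (Q.1 i).1 = 1 ∨ (Q.1 i).1 = 2)
    (hw : LevelSeq (parkingWord Q) 1) : toParking (toPolyomino Q) = Q := by
  rw [toParking, levels_toPolyomino hw]
  simp only [toPolyomino, preimage_succ_map_succEmb]
  exact parkingOfWord_parkingWord hlab

lemma dinvPF_toParking {P : RPolyCarrier (m + n)} (hP : IsRPolyo m n (RRl P) (RGl P)) :
    dinvPF (PFa (toParking P)) (PFb (toParking P)) = dinvR (RRl P) (RGl P) := by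
  rw [toParking, PFa_parkingOfWord hP.length_levels_interlace,
    PFb_parkingOfWord hP.length_levels_interlace, dinvR_eq_dinvPF]

lemma uareaPF_toParking {P : RPolyCarrier (m + n)} (hP : IsRPolyo m n (RRl P) (RGl P))
    (h0 : (0 : Fin (m + n + 1)) ∉ P.2) :
    uareaPF (PFb (toParking P)) (PFD (toParking P)) = uareaR (RRl P) (RGl P) (RDn P) := by
  rw [toParking, PFb_parkingOfWord hP.length_levels_interlace, RDn, PFD,
    ← image_val_preimage_succ h0, uareaR_image_succ]
  rfl

end

theorem psi_bijection_general (m n k r : ℕ) (hr : 1 ≤ r) :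
    ∃ e : RPStar m n r k ≃ PF2Star m n r k,
      ∀ P : RPStar m n r k,
        dinvPF (PFa (e P).val) (PFb (e P).val) = dinvR (RRl P.val) (RGl P.val) ∧
        uareaPF (PFb (e P).val) (PFD (e P).val) =
          uareaR (RRl P.val) (RGl P.val) (RDn P.val) := by
  have h0 (P : RPStar m n r k) := zero_notMem_of_isRPStar P.2
  exact ⟨{ toFun := fun P => ⟨toParking P.1, isPF2Star_toParking P.2⟩
           invFun := fun Q => ⟨toPolyomino Q.1, isRPStar_toPolyomino hr Q.2⟩
           left_inv := fun P => Subtype.ext (toPolyomino_toParking P.2.1 (h0 P))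
           right_inv := fun Q => Subtype.ext (toParking_toPolyomino Q.2.2.1
             ((isPF2Star_iff_parkingWord Q.2.2.1).1 Q.2).1) },
    fun P => ⟨dinvPF_toParking P.2.1, uareaPF_toParking P.2.1 (h0 P)⟩⟩

/-- The bijection `ψ` between decorated reduced `m × n` parallelogram polyominoes (with `r`
zeros in the area word and `k` decorated rises) and decorated two-cars parking functions
(with `n` ones, `m` twos, `r-1` twos on the main diagonal and `k` decorated rises),
preserving both `dinv` and `underlined area`. -/
theorem psi_bijection (m n k r : ℕ) (hr : 1 ≤ r) (hrm : r ≤ m + 1) :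
    ∃ e : RPStar m n r k ≃ PF2Star m n r k,
      ∀ P : RPStar m n r k,
        dinvPF (PFa (e P).val) (PFb (e P).val) = dinvR (RRl P.val) (RGl P.val) ∧
        uareaPF (PFb (e P).val) (PFD (e P).val) =
          uareaR (RRl P.val) (RGl P.val) (RDn P.val) :=
  psi_bijection_general m n k r hr
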